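/- arXiv:1108.5095 — 2 statements merged into one kernel-verified Lean document; each statement's English description precedes it below -/
import Mathlib

section
/- For every decreasing sequence α and level l with 0 < l ≤ log_2|Y^k_α|, an element y belongs to Y^k_{α·(l)} if and only if min Y^k_α + 2^{l−1} ≤ y < min Y^k_α + 2^l. -/
/-- The `k`-bit reversal permutation of `{0,…,2^k−1}`. -/
def revBits (k x : ℕ) : ℕ := ∑ i ∈ Finset.range k, 2 ^ i * (x / 2 ^ (k - 1 - i) % 2)

/-- The sets of time slots `Y^k_α`.  A (decreasing) sequence `α = (l_0,…,l_r)` of the paper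
is represented here as the list `[l_r, …, l_0]`, with the most recently appended level first:
`Y^k_{()} = {0,…,2^k−1}` and `Y^k_{α·(l)} = {y ∈ Y^k_α : ⌈log₂(y − min Y^k_α + 1)⌉ = l}`. -/
noncomputable def Y (k : ℕ) : List ℕ → Finset ℕ
  | [] => Finset.range (2 ^ k)
  | l :: α => (Y k α).filter (fun y => Nat.clog 2 (y - sInf {z : ℕ | z ∈ Y k α} + 1) = l)

/-- Validity of the (reversed) sequence: the paper's `α` is strictly decreasing with
entries in `{0,…,k}`, i.e. the reversed list is strictly increasing with entries `≤ k`. -/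
def ValidSeq (k : ℕ) (α : List ℕ) : Prop :=
  List.Pairwise (· < ·) α ∧ ∀ l ∈ α, l ≤ k

/-- The ranks `X^k_α = revBits_k(Y^k_α)`. -/
noncomputable def X (k : ℕ) (α : List ℕ) : Finset ℕ := (Y k α).image (revBits k)

/-- `step^k_{()} = 1` and `step^k_{α·(l)} = 2^{k−l+1}`. -/
def stepA (k : ℕ) : List ℕ → ℕ
  | [] => 1
  | l :: _ => 2 ^ (k - l + 1)


/-!
Every valid `Y^k_α` is an interval of length a power of two: `Y^k_{()} = [0, 2^k)`, and if
`Y^k_α = [m, m + N)` with `2^l ≤ N`, then `⌈log₂(y − m + 1)⌉ = l` carves out exactly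
`[m + 2^l / 2, m + 2^l)`, again of length `2^(l-1)` (read as `1` for `l = 0`). Strict monotonicity
of the reversed sequence keeps each new level below the logarithm of the current length, so the
induction goes through; the theorem is the carving step at the last level.
-/

open Finset

theorem Nat.clog_two_succ_eq_iff {d l : ℕ} :
    Nat.clog 2 (d + 1) = l ↔ 2 ^ l / 2 ≤ d ∧ d < 2 ^ l := by
  have upper : Nat.clog 2 (d + 1) ≤ l ↔ d < 2 ^ l := Nat.clog_le_iff_le_pow one_lt_two
  rw [le_antisymm_iff, upper, and_comm]
  cases l with
  | zero => simp
  | succ l =>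
    rw [Nat.succ_le_iff, Nat.lt_clog_iff_pow_lt one_lt_two, Nat.lt_succ_iff, pow_succ,
      Nat.mul_div_cancel _ two_pos]

theorem filter_clog_Ico_eq_Ico {m N l : ℕ} (hl : 2 ^ l ≤ N) :
    (Ico m (m + N)).filter (fun y => Nat.clog 2 (y - m + 1) = l) =
      Ico (m + 2 ^ l / 2) (m + 2 ^ l) := by
  ext y
  simp only [mem_filter, mem_Ico, Nat.clog_two_succ_eq_iff]
  omega

theorem ValidSeq.tail {k l : ℕ} {α : List ℕ} (h : ValidSeq k (l :: α)) : ValidSeq k α :=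
  ⟨h.1.of_cons, fun x hx => h.2 x (List.mem_cons_of_mem _ hx)⟩

/-- `log₂ |Y^k_α|` for valid `α`. -/
def logCardY (k : ℕ) : List ℕ → ℕ
  | [] => k
  | l :: _ => l - 1

theorem ValidSeq.le_logCardY {k l : ℕ} {α : List ℕ} (h : ValidSeq k (l :: α)) :
    l ≤ logCardY k α := by
  cases α with
  | nil => exact h.2 l List.mem_cons_self
  | cons l' α =>
    have : l < l' := List.rel_of_pairwise_cons h.1 List.mem_cons_self
    simp only [logCardY]
    omega

theorem sInf_Y_eq {k m N : ℕ} {α : List ℕ} (hY : Y k α = Ico m (m + N)) (hN : 0 < N) :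
    sInf {z : ℕ | z ∈ Y k α} = m := by
  simp only [hY, Finset.mem_coe.symm, coe_Ico]
  exact csInf_Ico (by omega)

theorem Y_cons_eq_Ico {k m N l : ℕ} {α : List ℕ} (hY : Y k α = Ico m (m + N)) (hl : 2 ^ l ≤ N) :
    Y k (l :: α) = Ico (m + 2 ^ l / 2) (m + 2 ^ l) := by
  rw [Y, sInf_Y_eq hY (lt_of_lt_of_le (Nat.two_pow_pos l) hl), hY, filter_clog_Ico_eq_Ico hl]

theorem Y_eq_Ico {k : ℕ} {α : List ℕ} (h : ValidSeq k α) :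
    ∃ m, Y k α = Ico m (m + 2 ^ logCardY k α) := by
  induction α with
  | nil => exact ⟨0, by rw [Y, logCardY, range_eq_Ico, zero_add]⟩
  | cons l α ih =>
    obtain ⟨m, hm⟩ := ih h.tail
    have hl : 2 ^ l ≤ 2 ^ logCardY k α := Nat.pow_le_pow_right two_pos h.le_logCardY
    refine ⟨m + 2 ^ l / 2, ?_⟩
    have half : 2 ^ l / 2 + 2 ^ (l - 1) = 2 ^ l := by
      cases l with
      | zero => rfl
      | succ l => rw [Nat.add_sub_cancel, pow_succ]; omega
    rw [Y_cons_eq_Ico hm hl, logCardY, add_assoc, half]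

/-- For `0 < l ≤ log₂|Y^k_α|`:
`y ∈ Y^k_{α·(l)}` iff `min Y^k_α + 2^{l−1} ≤ y < min Y^k_α + 2^l`. -/
theorem Y_level_interval (k : ℕ) (α : List ℕ) (l : ℕ) (h : ValidSeq k α)
    (hl0 : 0 < l) (hl : l ≤ Nat.log 2 (Y k α).card) (y : ℕ) :
    y ∈ Y k (l :: α) ↔
      sInf {z : ℕ | z ∈ Y k α} + 2 ^ (l - 1) ≤ y ∧ y < sInf {z : ℕ | z ∈ Y k α} + 2 ^ l := by
  obtain ⟨m, hm⟩ := Y_eq_Ico h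
  rw [hm, Nat.card_Ico, Nat.add_sub_cancel_left, Nat.log_pow one_lt_two] at hl
  have half : 2 ^ l / 2 = 2 ^ (l - 1) := Nat.pow_div hl0 two_pos
  rw [Y_cons_eq_Ico hm (Nat.pow_le_pow_right two_pos hl), sInf_Y_eq hm (Nat.two_pow_pos _),
    mem_Ico, half]
end

section
/- In the binary search process on a revBits_k-permuted sorted sequence of length n = 2^k started at slot t_0, the terminating slot t_e occurs at most n time slots after t_0. -/
/-- `nextSlotIn_k(t, r₁, r₂)`: the next time slot after `t` (mod `2^k`) whose rank lies
in `[r₁, r₂]`. -/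
noncomputable def nextSlotIn (k t : ℕ) (r1 r2 : ℤ) : ℕ :=
  (t + sInf {d : ℕ | 0 < d ∧ r1 ≤ (revBits k ((t + d) % 2 ^ k) : ℤ) ∧
      (revBits k ((t + d) % 2 ^ k) : ℤ) ≤ r2}) % 2 ^ k

/-- The state `(t_i, minr_i, maxr_i)` of the receiver's binary search process:
`(t₀, 0, 2^k − 1)` initially; at each step `t_{i+1} = nextSlotIn_k(t_i, minr_i, maxr_i)`
and the bounds are updated by comparing the searched key `κ` with `keys (revBits_k t_{i+1})`. -/
noncomputable def rboState (k : ℕ) (keys : ℕ → ℤ) (κ : ℤ) (t0 : ℕ) : ℕ → ℕ × ℤ × ℤ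
  | 0 => (t0, 0, 2 ^ k - 1)
  | i + 1 =>
    let s := rboState k keys κ t0 i
    let t' := nextSlotIn k s.1 s.2.1 s.2.2
    let r := revBits k t'
    if κ < keys r then (t', s.2.1, (r : ℤ) - 1)
    else if keys r < κ then (t', (r : ℤ) + 1, s.2.2)
    else (t', s.2.1, s.2.2)

/-- The search terminates at step `i`: either the interval of possible ranks is exhausted
(`minr_i ≥ maxr_i`) or the searched key has been found. -/
def rboTerm (k : ℕ) (keys : ℕ → ℤ) (κ : ℤ) (t0 : ℕ) (i : ℕ) : Prop :=
  (rboState k keys κ t0 i).2.2 ≤ (rboState k keys κ t0 i).2.1 ∨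
    keys (revBits k (rboState k keys κ t0 i).1) = κ

/-- The number of time slots elapsed between `t_i` and `t_{i+1}`. -/
noncomputable def rboDelay (k : ℕ) (keys : ℕ → ℤ) (κ : ℤ) (t0 : ℕ) (i : ℕ) : ℕ :=
  sInf {d : ℕ | 0 < d ∧
    (rboState k keys κ t0 i).2.1 ≤
      (revBits k (((rboState k keys κ t0 i).1 + d) % 2 ^ k) : ℤ) ∧
    (revBits k (((rboState k keys κ t0 i).1 + d) % 2 ^ k) : ℤ) ≤
      (rboState k keys κ t0 i).2.2}


lemma revBits_succ (k x : ℕ) : revBits (k + 1) x = 2 ^ k * (x % 2) + revBits k (x / 2) := by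
  rw [revBits, Finset.sum_range_succ, add_comm, Nat.add_sub_cancel, Nat.sub_self, pow_zero,
    Nat.div_one, revBits]
  congr 1
  refine Finset.sum_congr rfl fun i hi => ?_
  rw [Nat.div_div_eq_div_mul, ← pow_succ']
  have := Finset.mem_range.mp hi
  congr 4
  omega

lemma revBits_lt (k x : ℕ) : revBits k x < 2 ^ k := by
  induction k generalizing x with
  | zero => simp [revBits]
  | succ k ih =>
    rw [revBits_succ, pow_succ]
    have := ih (x / 2)
    have : x % 2 ≤ 1 := by omega
    nlinarith

lemma revBits_injOn (k : ℕ) : Set.InjOn (revBits k) (Set.Iio (2 ^ k)) := by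
  induction k with
  | zero => intro x hx y hy _; simp_all
  | succ k ih =>
    intro x hx y hy h
    simp only [Set.mem_Iio, pow_succ] at hx hy
    rw [revBits_succ, revBits_succ] at h
    have hx' := revBits_lt k (x / 2)
    have hy' := revBits_lt k (y / 2)
    -- the leading bit `2 ^ k * (x % 2)` dominates the lower bits, which are `< 2 ^ k`
    have hbit : x % 2 = y % 2 := by
      rcases Nat.mod_two_eq_zero_or_one x with h1 | h1 <;>
        rcases Nat.mod_two_eq_zero_or_one y with h2 | h2 <;> simp_all; omega
    rw [hbit, Nat.add_left_cancel_iff] at h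
    have := ih (show x / 2 < 2 ^ k by omega) (show y / 2 < 2 ^ k by omega) h
    omega

lemma revBits_bijOn (k : ℕ) : Set.BijOn (revBits k) (Set.Iio (2 ^ k)) (Set.Iio (2 ^ k)) :=
  ((Set.finite_Iio _).injOn_iff_bijOn_of_mapsTo fun x _ => revBits_lt k x).mp (revBits_injOn k)

lemma exists_pos_le_add_mod_eq {n u : ℕ} (t : ℕ) (hu : u < n) :
    ∃ d, 0 < d ∧ d ≤ n ∧ (t + d) % n = u := by
  have ht : t % n < n := Nat.mod_lt _ (by omega)
  by_cases h : t % n < u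
  · refine ⟨u - t % n, by omega, by omega, ?_⟩
    rw [← Nat.mod_add_mod, Nat.add_sub_cancel' h.le, Nat.mod_eq_of_lt hu]
  · refine ⟨u + n - t % n, by omega, by omega, ?_⟩
    rw [← Nat.mod_add_mod, show t % n + (u + n - t % n) = u + n by omega, Nat.add_mod_right,
      Nat.mod_eq_of_lt hu]

section
variable (k : ℕ) (keys : ℕ → ℤ) (κ : ℤ) (t0 : ℕ)

def rboRanks (i : ℕ) : Set ℤ :=
  Set.Icc (rboState k keys κ t0 i).2.1 (rboState k keys κ t0 i).2.2

lemma rboState_succ_fst (i : ℕ) :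
    (rboState k keys κ t0 (i + 1)).1 =
      ((rboState k keys κ t0 i).1 + rboDelay k keys κ t0 i) % 2 ^ k := by
  simp only [rboState]
  split_ifs <;> rfl

lemma rboState_fst_eq (ht0 : t0 < 2 ^ k) (i : ℕ) :
    (rboState k keys κ t0 i).1 = (t0 + ∑ j ∈ Finset.range i, rboDelay k keys κ t0 j) % 2 ^ k := by
  induction i with
  | zero => simp [rboState, Nat.mod_eq_of_lt ht0]
  | succ i ih => rw [rboState_succ_fst, ih, Finset.sum_range_succ, Nat.mod_add_mod, add_assoc]

lemma rboState_bounds (i : ℕ) :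
    0 ≤ (rboState k keys κ t0 i).2.1 ∧ (rboState k keys κ t0 i).2.2 < 2 ^ k := by
  induction i with
  | zero => simp [rboState]
  | succ i ih =>
    have : (revBits k (rboState k keys κ t0 (i + 1)).1 : ℤ) < 2 ^ k := by
      exact_mod_cast revBits_lt k _
    simp only [rboState] at this ⊢
    split_ifs at this ⊢ <;> dsimp only at this ⊢ <;> omega

lemma rboDelay_le {i d : ℕ} (hd : 0 < d)
    (h : (revBits k (((rboState k keys κ t0 i).1 + d) % 2 ^ k) : ℤ) ∈ rboRanks k keys κ t0 i) :
    rboDelay k keys κ t0 i ≤ d :=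
  Nat.sInf_le ⟨hd, h⟩

lemma rank_succ_mem_rboRanks {i : ℕ} (hne : (rboRanks k keys κ t0 i).Nonempty) :
    (revBits k (rboState k keys κ t0 (i + 1)).1 : ℤ) ∈ rboRanks k keys κ t0 i := by
  obtain ⟨r, hr⟩ := hne
  obtain ⟨hlo, hhi⟩ := rboState_bounds k keys κ t0 i
  have hr0 : 0 ≤ r := hlo.trans hr.1
  have hr_lt : r.toNat < 2 ^ k := (Int.toNat_lt hr0).mpr (by push_cast; exact hr.2.trans_lt hhi)
  obtain ⟨u, hu, hur⟩ := (revBits_bijOn k).surjOn hr_lt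
  obtain ⟨d, hd, -, hdu⟩ := exists_pos_le_add_mod_eq (rboState k keys κ t0 i).1 hu
  have hne : {d : ℕ | 0 < d ∧ (revBits k (((rboState k keys κ t0 i).1 + d) % 2 ^ k) : ℤ) ∈
      rboRanks k keys κ t0 i}.Nonempty :=
    ⟨d, hd, by rwa [hdu, hur, Int.toNat_of_nonneg hr0]⟩
  rw [rboState_succ_fst]
  exact (Nat.sInf_mem hne).2

lemma rboRanks_succ_subset {i : ℕ}
    (h : (revBits k (rboState k keys κ t0 (i + 1)).1 : ℤ) ∈ rboRanks k keys κ t0 i) :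
    rboRanks k keys κ t0 (i + 1) ⊆ rboRanks k keys κ t0 i := by
  simp only [rboRanks, rboState, Set.mem_Icc] at h ⊢
  split_ifs at h ⊢ <;> dsimp only at h ⊢ <;> exact Set.Icc_subset_Icc (by omega) (by omega)

lemma rank_succ_not_mem_rboRanks_succ {i : ℕ}
    (h : keys (revBits k (rboState k keys κ t0 (i + 1)).1) ≠ κ) :
    (revBits k (rboState k keys κ t0 (i + 1)).1 : ℤ) ∉ rboRanks k keys κ t0 (i + 1) := by
  simp only [rboRanks, rboState, Set.mem_Icc] at h ⊢
  split_ifs at h ⊢ <;> dsimp only at h ⊢ <;> omega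

end

section
variable {k : ℕ} {keys : ℕ → ℤ} {κ : ℤ} {t0 e : ℕ}

lemma rboRanks_nonempty (hmin : ∀ i : ℕ, 0 < i → i < e → ¬ rboTerm k keys κ t0 i) {i : ℕ}
    (hi : i < e) : (rboRanks k keys κ t0 i).Nonempty := by
  rcases i.eq_zero_or_pos with rfl | hi0
  · refine Set.nonempty_Icc.mpr ?_
    simp only [rboState, sub_nonneg]
    exact one_le_pow₀ one_le_two
  · have hnot := hmin i hi0 hi
    simp only [rboTerm, not_or, not_le] at hnot
    exact Set.nonempty_Icc.mpr hnot.1.le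

lemma rboRanks_antitone (hmin : ∀ i : ℕ, 0 < i → i < e → ¬ rboTerm k keys κ t0 i) {i j : ℕ}
    (hij : i ≤ j) (hj : j < e) : rboRanks k keys κ t0 j ⊆ rboRanks k keys κ t0 i := by
  induction j, hij using Nat.le_induction with
  | base => exact le_rfl
  | succ j _ ih =>
    have hmem := rank_succ_mem_rboRanks k keys κ t0 (rboRanks_nonempty hmin (i := j) (by omega))
    exact (rboRanks_succ_subset k keys κ t0 hmem).trans (ih (by omega))

lemma rank_terminal_mem_rboRanks (hmin : ∀ i : ℕ, 0 < i → i < e → ¬ rboTerm k keys κ t0 i)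
    (he : 0 < e) {i : ℕ} (hi : i < e) :
    (revBits k (rboState k keys κ t0 e).1 : ℤ) ∈ rboRanks k keys κ t0 i := by
  obtain ⟨j, rfl⟩ : ∃ j, e = j + 1 := ⟨e - 1, by omega⟩
  exact rboRanks_antitone hmin (by omega) (by omega)
    (rank_succ_mem_rboRanks k keys κ t0 (rboRanks_nonempty hmin (by omega)))

lemma rboState_fst_ne_terminal (hmin : ∀ i : ℕ, 0 < i → i < e → ¬ rboTerm k keys κ t0 i)
    (he : 0 < e) {i : ℕ} (hi0 : 0 < i) (hi : i < e) :
    (rboState k keys κ t0 i).1 ≠ (rboState k keys κ t0 e).1 := by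
  intro h
  obtain ⟨j, rfl⟩ : ∃ j, i = j + 1 := ⟨i - 1, by omega⟩
  have hkey : keys (revBits k (rboState k keys κ t0 (j + 1)).1) ≠ κ :=
    fun hκ => hmin _ hi0 hi (Or.inr hκ)
  exact rank_succ_not_mem_rboRanks_succ k keys κ t0 hkey
    (h ▸ rank_terminal_mem_rboRanks hmin he hi)

lemma sum_rboDelay_le (hmin : ∀ i : ℕ, 0 < i → i < e → ¬ rboTerm k keys κ t0 i) (he : 0 < e)
    (ht0 : t0 < 2 ^ k) {τ : ℕ} (hτ0 : 0 < τ) (hτ : (t0 + τ) % 2 ^ k = (rboState k keys κ t0 e).1)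
    {i : ℕ} (hi : i ≤ e) : ∑ j ∈ Finset.range i, rboDelay k keys κ t0 j ≤ τ := by
  induction i with
  | zero => simp
  | succ i ih =>
    have hfst := rboState_fst_eq k keys κ t0 ht0 i
    set S := ∑ j ∈ Finset.range i, rboDelay k keys κ t0 j
    have hS : S ≤ τ := ih (by omega)
    have hlt : S < τ := by
      refine hS.lt_of_ne fun hSτ => ?_
      rcases i.eq_zero_or_pos with rfl | hi0
      · simp [S] at hSτ
        omega
      · exact rboState_fst_ne_terminal hmin he hi0 (by omega) (by rw [hfst, hSτ, hτ])
    have hslot : ((rboState k keys κ t0 i).1 + (τ - S)) % 2 ^ k = (rboState k keys κ t0 e).1 := by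
      rw [hfst, Nat.mod_add_mod, add_assoc, Nat.add_sub_cancel' hS, hτ]
    have hdelay := rboDelay_le k keys κ t0 (Nat.sub_pos_of_lt hlt)
      (hslot ▸ rank_terminal_mem_rboRanks hmin he (by omega))
    rw [Finset.sum_range_succ]
    omega

end

theorem rbo_time_bound_general (k : ℕ) (keys : ℕ → ℤ)
    (κ : ℤ) (t0 : ℕ) (ht0 : t0 < 2 ^ k)
    (e : ℕ) (he : 0 < e)
    (hmin : ∀ i : ℕ, 0 < i → i < e → ¬ rboTerm k keys κ t0 i) :
    ∑ i ∈ Finset.range e, rboDelay k keys κ t0 i ≤ 2 ^ k := by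
  have hte : (rboState k keys κ t0 e).1 < 2 ^ k := by
    rw [rboState_fst_eq k keys κ t0 ht0]
    exact Nat.mod_lt _ (by positivity)
  obtain ⟨τ, hτ0, hτn, hτ⟩ := exists_pos_le_add_mod_eq t0 hte
  exact (sum_rboDelay_le hmin he ht0 hτ0 hτ le_rfl).trans hτn

/-- If `e` is the first step at which the search terminates, then the terminating slot
`t_e` occurs at most `n = 2^k` time slots after `t_0`. -/
theorem rbo_time_bound (k : ℕ) (hk : 0 < k) (keys : ℕ → ℤ)
    (hmono : ∀ i j : ℕ, i ≤ j → j < 2 ^ k → keys i ≤ keys j)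
    (κ : ℤ) (t0 : ℕ) (ht0 : t0 < 2 ^ k)
    (e : ℕ) (he : 0 < e) (hterm : rboTerm k keys κ t0 e)
    (hmin : ∀ i : ℕ, 0 < i → i < e → ¬ rboTerm k keys κ t0 i) :
    ∑ i ∈ Finset.range e, rboDelay k keys κ t0 i ≤ 2 ^ k :=
  rbo_time_bound_general k keys κ t0 ht0 e he hmin
end
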